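/- arXiv:math/0610466 — 4 statements merged into one kernel-verified Lean document; each statement's English description precedes it below -/
import Mathlib

section
/- There exists a universal constant C > 0 such that for every ε ∈ (0, 1/2) and every integer m > 1, the hitting time τ satisfies E[ τ^2 ] ≤ C · ε^{-3}. -/
open MeasureTheory Finset Filter ProbabilityTheory
open scoped ENNReal

/-- The binomial distribution with parameters `m` and `p`, as a measure on `ℕ`. -/
noncomputable def binomialMeasure (m : ℕ) (p : ℝ) : Measure ℕ :=
  ∑ k ∈ Finset.range (m + 1),
    ENNReal.ofReal (m.choose k * p ^ k * (1 - p) ^ (m - k)) • Measure.dirac k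

/-- The walk `W_t = 1 + ∑_{j=1}^t (β_j - 1)` driven by the increments `β`. -/
def walkW {Ω : Type*} (β : ℕ → Ω → ℕ) (t : ℕ) (ω : Ω) : ℤ :=
  1 + ∑ j ∈ Finset.range t, ((β j ω : ℤ) - 1)

/-- The hitting time of `0` by the walk, `τ = min {t ≥ 1 : W_t = 0}`, as a value in `ℝ≥0∞`
(equal to `∞` if the walk never hits `0`). -/
noncomputable def hitTime {Ω : Type*} (β : ℕ → Ω → ℕ) (ω : Ω) : ℝ≥0∞ :=
  sInf ((fun t : ℕ => (t : ℝ≥0∞)) '' {t | 1 ≤ t ∧ walkW β t ω = 0})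

/-!
Under the binomial law the increments `ξ j = β j - (1 - ε)` are independent and centred, with
variance `σ² = (1 - ε) (1 - p) ≤ 1`. Hence the partial sums `S n` and `S n ^ 2 - n σ²` are
martingales, and optional stopping at the bounded time `T = τ ∧ n` gives Wald's identities
`E[S_T] = 0` and `E[S_T²] = σ² E[T]`. The walk moves down by at most one per step, so it is still
nonnegative at `T`, whence `1 + S_T = W_T + ε T ≥ ε T`. The first identity gives `ε E[T] ≤ 1`, the
second `ε² E[T²] ≤ E[(1 + S_T)²] = 1 + σ² E[T] ≤ 1 + 1/ε ≤ 2/ε`; so `E[(τ ∧ n)²] ≤ 2 ε⁻³`, and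
monotone convergence lets `n → ∞`.
-/

open unitInterval

lemma binomialMeasure_eq_binomial (m : ℕ) {p : ℝ} (hp : p ∈ I) :
    binomialMeasure m p = binomial m ⟨p, hp⟩ := by
  rw [binomial_eq_sum_dirac, binomialMeasure, Nat.range_succ_eq_Iic]

lemma integral_binomial_eq_sum_bernsteinPolynomial (n : ℕ) (p : I) (f : ℕ → ℝ) :
    ∫ k, f k ∂binomial n p =
      ∑ k ∈ range (n + 1), (bernsteinPolynomial ℝ n k).eval (p : ℝ) * f k := by
  simp [integral_binomial, ← Nat.range_succ_eq_Iic, bernsteinPolynomial]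

lemma integral_natCast_binomial (n : ℕ) (p : I) : ∫ k, (k : ℝ) ∂binomial n p = n * p := by
  have h := congrArg (Polynomial.eval (p : ℝ)) (bernsteinPolynomial.sum_smul (R := ℝ) n)
  simp only [Polynomial.eval_finsetSum, nsmul_eq_mul, Polynomial.eval_mul, Polynomial.eval_natCast,
    Polynomial.eval_X] at h
  rw [integral_binomial_eq_sum_bernsteinPolynomial, ← h]
  exact sum_congr rfl fun k _ => mul_comm _ _

lemma integral_sub_sq_binomial (n : ℕ) (p : I) :
    ∫ k, ((k : ℝ) - n * p) ^ 2 ∂binomial n p = n * p * (1 - p) := by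
  have h := congrArg (Polynomial.eval (p : ℝ)) (bernsteinPolynomial.variance (R := ℝ) n)
  simp only [Polynomial.eval_finsetSum, nsmul_eq_mul, Polynomial.eval_mul, Polynomial.eval_pow,
    Polynomial.eval_sub, Polynomial.eval_natCast, Polynomial.eval_one, Polynomial.eval_X] at h
  rw [integral_binomial_eq_sum_bernsteinPolynomial, ← h]
  exact sum_congr rfl fun k _ => by ring

section BinomialLaw

variable {Ω : Type*} [MeasurableSpace Ω] {μ : Measure Ω} {X : Ω → ℕ} {n : ℕ} {p : I}

lemma memLp_two_comp_of_hasLaw_binomial (hX : HasLaw X (binomial n p) μ) (g : ℕ → ℝ) :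
    MemLp (fun ω => g (X ω)) 2 μ := by
  refine (memLp_two_iff_integrable_sq
    (measurable_from_nat.comp_aemeasurable hX.aemeasurable).aestronglyMeasurable).mpr ?_
  have : Integrable (fun k => g k ^ 2) (μ.map X) := hX.map_eq ▸ integrable_binomial _
  exact (integrable_map_measure measurable_from_nat.aestronglyMeasurable hX.aemeasurable).mp this

lemma integral_comp_of_hasLaw_binomial (hX : HasLaw X (binomial n p) μ) (g : ℕ → ℝ) :
    ∫ ω, g (X ω) ∂μ = ∫ k, g k ∂binomial n p :=
  hX.integral_comp (f := g) measurable_from_nat.aestronglyMeasurable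

lemma integral_natCast_sub_of_hasLaw_binomial (hX : HasLaw X (binomial n p) μ) :
    ∫ ω, ((X ω : ℝ) - n * p) ∂μ = 0 := by
  rw [integral_comp_of_hasLaw_binomial hX (fun k => (k : ℝ) - n * p),
    integral_sub (integrable_binomial _) (integrable_const _), integral_natCast_binomial]
  simp

lemma integral_natCast_sub_sq_of_hasLaw_binomial (hX : HasLaw X (binomial n p) μ) :
    ∫ ω, ((X ω : ℝ) - n * p) ^ 2 ∂μ = n * p * (1 - p) := by
  rw [integral_comp_of_hasLaw_binomial hX (fun k => ((k : ℝ) - n * p) ^ 2),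
    integral_sub_sq_binomial]

end BinomialLaw

section PastFiltration

variable {Ω E : Type*} {m0 : MeasurableSpace Ω} [mE : MeasurableSpace E] {X : ℕ → Ω → E}

/-- Unlike `Filtration.natural`, the `n`-th σ-algebra excludes `X n`, which is therefore
independent of it when the `X j` are. -/
def pastFiltration (X : ℕ → Ω → E) (hX : ∀ n, Measurable (X n)) : Filtration ℕ m0 where
  seq n := ⨆ j < n, mE.comap (X j)
  mono' _ _ hnk := biSup_mono fun _ hj => hj.trans_le hnk
  le' _ := iSup₂_le fun j _ => (hX j).comap_le

variable (hX : ∀ n, Measurable (X n))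

lemma measurable_pastFiltration_succ (n : ℕ) : Measurable[pastFiltration X hX (n + 1)] (X n) :=
  Measurable.of_comap_le (le_iSup₂ (f := fun j (_ : j < n + 1) => mE.comap (X j)) n n.lt_succ_self)

lemma indep_pastFiltration {μ : Measure Ω} (hind : iIndepFun X μ) (n : ℕ) :
    Indep (mE.comap (X n)) (pastFiltration X hX n) μ := by
  have := indep_iSup_of_disjoint (fun j => (hX j).comap_le) hind.iIndep
    (Set.disjoint_singleton_left.mpr (lt_irrefl n) : Disjoint {n} {j | j < n})
  simpa [pastFiltration] using this

end PastFiltration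

section OptionalStopping

variable {Ω : Type*} {m0 : MeasurableSpace Ω} {μ : Measure Ω} {ℱ : Filtration ℕ m0}

theorem MeasureTheory.Martingale.integral_stoppedValue_eq_integral_zero [IsFiniteMeasure μ]
    {f : ℕ → Ω → ℝ} (hf : Martingale f ℱ μ) {τ : Ω → WithTop ℕ} (hτ : IsStoppingTime ℱ τ)
    {N : ℕ} (hbdd : ∀ ω, τ ω ≤ N) : μ[stoppedValue f τ] = μ[f 0] := by
  have h0 : IsStoppingTime ℱ (fun _ => ((0 : ℕ) : WithTop ℕ)) := isStoppingTime_const ℱ 0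
  have hle : μ[f 0] ≤ μ[stoppedValue f τ] :=
    hf.submartingale.expected_stoppedValue_mono h0 hτ (fun _ => bot_le) hbdd
  have hge : μ[-f 0] ≤ μ[-stoppedValue f τ] :=
    hf.neg.submartingale.expected_stoppedValue_mono h0 hτ (fun _ => bot_le) hbdd
  rw [integral_neg', integral_neg'] at hge
  linarith

-- `WithTop.some` rather than a coercion: `((T ω : ℕ) : WithTop ℕ)` elaborates to `Nat.cast`,
-- which does not match the stopping times produced by `Adapted.isStoppingTime_hittingBtwn`.
lemma MeasureTheory.IsStoppingTime.measurable_of_coe {T : Ω → ℕ}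
    (hT : IsStoppingTime ℱ (fun ω => WithTop.some (T ω))) : Measurable T :=
  measurable_to_countable' fun i => ℱ.le i _ <| by
    convert hT.measurableSet_eq i using 1; ext ω; simp

lemma MeasureTheory.IsStoppingTime.integrable_coe_of_le [IsFiniteMeasure μ] {T : Ω → ℕ}
    (hT : IsStoppingTime ℱ (fun ω => WithTop.some (T ω))) {N : ℕ} (hTN : ∀ ω, T ω ≤ N) :
    Integrable (fun ω => (T ω : ℝ)) μ :=
  .of_bound (measurable_from_nat.comp hT.measurable_of_coe).aestronglyMeasurable N
    (ae_of_all _ fun ω => by simpa using hTN ω)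

lemma MeasureTheory.stoppedValue_coe {ι β : Type*} [Nonempty ι] (f : ι → Ω → β) (T : Ω → ι) :
    stoppedValue f (fun ω => (T ω : WithTop ι)) = fun ω => f (T ω) ω :=
  rfl

end OptionalStopping

section RandomWalkMartingale

variable {Ω : Type*} {m0 : MeasurableSpace Ω} {μ : Measure Ω} {ℱ : Filtration ℕ m0}
  {ξ : ℕ → Ω → ℝ}

lemma memLp_partialSum_stopped {T : Ω → ℕ} (hT : IsStoppingTime ℱ (fun ω => WithTop.some (T ω)))
    {N : ℕ} (hTN : ∀ ω, T ω ≤ N) (hL2 : ∀ n, MemLp (ξ n) 2 μ) :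
    MemLp (fun ω => ∑ j ∈ range (T ω), ξ j ω) 2 μ := by
  have h : MemLp (stoppedValue (fun n ω => ∑ j ∈ range n, ξ j ω) fun ω => WithTop.some (T ω)) 2 μ :=
    memLp_stoppedValue hT (fun n => memLp_finsetSum (range n) fun j _ => hL2 j) (N := N)
      fun ω => WithTop.coe_le_coe.mpr (hTN ω)
  simpa only [stoppedValue_coe] using h

variable [IsProbabilityMeasure μ]
  (hξ : ∀ n, Measurable[ℱ (n + 1)] (ξ n))
  (hind : ∀ n, Indep (MeasurableSpace.comap (ξ n) inferInstance) (ℱ n) μ)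
include hξ

lemma stronglyAdapted_partialSum :
    StronglyAdapted ℱ (fun n ω => ∑ j ∈ range n, ξ j ω) := fun _ =>
  (Finset.measurable_sum _ fun j hj =>
    (hξ j).mono (ℱ.mono (mem_range.mp hj)) le_rfl).stronglyMeasurable

include hind

lemma condExp_comp_increment (n : ℕ) {g : ℝ → ℝ} (hg : Measurable g) :
    μ[fun ω => g (ξ n ω) | ℱ n] =ᵐ[μ] fun _ => μ[fun ω => g (ξ n ω)] :=
  condExp_indep_eq ((hξ n).mono (ℱ.le _) le_rfl).comap_le (ℱ.le n)
    (hg.comp (comap_measurable (ξ n))).stronglyMeasurable (hind n)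

theorem martingale_partialSum (hmean : ∀ n, μ[ξ n] = 0) (hint : ∀ n, Integrable (ξ n) μ) :
    Martingale (fun n ω => ∑ j ∈ range n, ξ j ω) ℱ μ := by
  refine martingale_of_condExp_sub_eq_zero_nat (stronglyAdapted_partialSum hξ)
    (fun n => integrable_finsetSum _ fun j _ => hint j) fun n => ?_
  have hinc : (fun ω => ∑ j ∈ range (n + 1), ξ j ω) - (fun ω => ∑ j ∈ range n, ξ j ω) = ξ n := by
    ext ω; simp [sum_range_succ]
  filter_upwards [condExp_comp_increment hξ hind n measurable_id'] with ω hω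
  simpa [hinc, hmean n] using hω

theorem martingale_partialSum_sq_sub {σ2 : ℝ} (hmean : ∀ n, μ[ξ n] = 0)
    (hL2 : ∀ n, MemLp (ξ n) 2 μ) (hvar : ∀ n, μ[ξ n ^ 2] = σ2) :
    Martingale (fun n ω => (∑ j ∈ range n, ξ j ω) ^ 2 - n * σ2) ℱ μ := by
  set S := fun n ω => ∑ j ∈ range n, ξ j ω with hS
  have hSL2 : ∀ n, MemLp (S n) 2 μ := fun n => memLp_finsetSum _ fun j _ => hL2 j
  have hSξ : ∀ n, Integrable ((fun ω => 2 * S n ω) * ξ n) μ := fun n =>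
    ((hSL2 n).const_mul 2).integrable_mul (hL2 n)
  have hξ2 : ∀ n, Integrable (fun ω => ξ n ω ^ 2 - σ2) μ := fun n =>
    (hL2 n).integrable_sq.sub (integrable_const σ2)
  refine martingale_of_condExp_sub_eq_zero_nat (fun n =>
      (((stronglyAdapted_partialSum hξ n).measurable.pow_const 2).sub_const _).stronglyMeasurable)
    (fun n => (hSL2 n).integrable_sq.sub (integrable_const _)) fun n => ?_
  have hinc : (fun ω => S (n + 1) ω ^ 2 - (n + 1 : ℕ) * σ2) - (fun ω => S n ω ^ 2 - n * σ2)
      = (fun ω => 2 * S n ω) * ξ n + fun ω => ξ n ω ^ 2 - σ2 := by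
    ext ω
    simp only [hS, sum_range_succ, Pi.sub_apply, Pi.add_apply, Pi.mul_apply]
    push_cast
    ring
  have hcross : μ[(fun ω => 2 * S n ω) * ξ n | ℱ n] =ᵐ[μ] 0 := by
    filter_upwards [condExp_mul_of_stronglyMeasurable_left
      (((stronglyAdapted_partialSum hξ n).measurable.const_mul 2).stronglyMeasurable)
      (hSξ n) (MemLp.integrable one_le_two (hL2 n)),
      condExp_comp_increment hξ hind n measurable_id']
      with ω h1 h2
    exact h1.trans (by simp [h2, hmean n])
  have hsq : μ[fun ω => ξ n ω ^ 2 - σ2 | ℱ n] =ᵐ[μ] 0 := by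
    filter_upwards [condExp_comp_increment hξ hind n (g := fun x => x ^ 2 - σ2) (by fun_prop)]
      with ω h
    rw [h, integral_sub (hL2 n).integrable_sq (integrable_const σ2)]
    simp [← hvar n]
  rw [hinc]
  filter_upwards [condExp_add (hSξ n) (hξ2 n) (ℱ n), hcross, hsq] with ω h h1 h2
  simp [h, h1, h2]

variable {T : Ω → ℕ} (hT : IsStoppingTime ℱ (fun ω => WithTop.some (T ω)))
  {N : ℕ} (hTN : ∀ ω, T ω ≤ N)
include hT hTN

theorem integral_partialSum_stopped (hmean : ∀ n, μ[ξ n] = 0) (hint : ∀ n, Integrable (ξ n) μ) :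
    ∫ ω, ∑ j ∈ range (T ω), ξ j ω ∂μ = 0 := by
  have h := (martingale_partialSum hξ hind hmean hint).integral_stoppedValue_eq_integral_zero hT
    (N := N) fun ω => WithTop.coe_le_coe.mpr (hTN ω)
  simp only [stoppedValue_coe] at h
  simpa using h

theorem integral_partialSum_stopped_sq {σ2 : ℝ} (hmean : ∀ n, μ[ξ n] = 0)
    (hL2 : ∀ n, MemLp (ξ n) 2 μ) (hvar : ∀ n, μ[ξ n ^ 2] = σ2) :
    ∫ ω, (∑ j ∈ range (T ω), ξ j ω) ^ 2 ∂μ = σ2 * ∫ ω, (T ω : ℝ) ∂μ := by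
  have h := (martingale_partialSum_sq_sub hξ hind hmean hL2 hvar
    ).integral_stoppedValue_eq_integral_zero hT (N := N) fun ω => WithTop.coe_le_coe.mpr (hTN ω)
  simp only [stoppedValue_coe] at h
  rw [integral_sub (memLp_partialSum_stopped hT hTN hL2).integrable_sq
    ((hT.integrable_coe_of_le hTN).mul_const σ2), integral_mul_const] at h
  simpa [sub_eq_zero, mul_comm] using h

end RandomWalkMartingale

lemma pos_of_forall_ne_zero_of_sub_one_le {u : ℕ → ℤ} (h0 : 0 < u 0)
    (hstep : ∀ t, u t - 1 ≤ u (t + 1)) : ∀ {n}, (∀ t ≤ n, u t ≠ 0) → 0 < u n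
  | 0, _ => h0
  | n + 1, hne => by
    have ih := pos_of_forall_ne_zero_of_sub_one_le h0 hstep fun t ht => hne t (ht.trans n.le_succ)
    have := hstep n
    have := hne (n + 1) le_rfl
    omega

section Walk

variable {Ω : Type*} {β : ℕ → Ω → ℕ} {ω : Ω}

lemma walkW_zero : walkW β 0 ω = 1 := by simp [walkW]

lemma walkW_succ (t : ℕ) : walkW β (t + 1) ω = walkW β t ω + β t ω - 1 := by
  simp only [walkW, sum_range_succ]; ring

lemma walkW_add_mul_eq (c : ℝ) (t : ℕ) :
    (walkW β t ω : ℝ) + (1 - c) * t = 1 + ∑ j ∈ range t, ((β j ω : ℝ) - c) := by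
  simp only [walkW, sum_sub_distrib, sum_const, card_range, nsmul_eq_mul]
  push_cast
  ring

-- `hittingBtwn (walkW β) {0} 1 n` is the stopped time `τ ∧ n`: the first `t ∈ [1, n]` with
-- `W_t = 0`, or `n` if there is none.
lemma walkW_hittingBtwn_nonneg (n : ℕ) :
    0 ≤ walkW β (hittingBtwn (walkW β) {0} 1 n ω) ω := by
  by_cases h : ∃ j ∈ Set.Icc 1 n, walkW β j ω ∈ ({0} : Set ℤ)
  · exact (hittingBtwn_mem_set h).symm.le
  · have hn : hittingBtwn (walkW β) {0} 1 n ω = n := if_neg h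
    rw [hn]
    refine (pos_of_forall_ne_zero_of_sub_one_le (u := fun t => walkW β t ω) (by simp [walkW_zero])
      (fun t => by rw [walkW_succ]; omega) fun t ht h0 => ?_).le
    rcases t with _ | t
    · simp [walkW_zero] at h0
    · exact h ⟨t + 1, ⟨by omega, ht⟩, h0⟩

lemma sub_mul_hittingBtwn_le (c : ℝ) (n : ℕ) :
    (1 - c) * (hittingBtwn (walkW β) {0} 1 n ω : ℕ) ≤
      1 + ∑ j ∈ range (hittingBtwn (walkW β) {0} 1 n ω), ((β j ω : ℝ) - c) := by
  rw [← walkW_add_mul_eq]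
  have : (0 : ℝ) ≤ walkW β (hittingBtwn (walkW β) {0} 1 n ω) ω := by
    exact_mod_cast walkW_hittingBtwn_nonneg (β := β) (ω := ω) n
  linarith

lemma hitTime_le_iSup_hittingBtwn (β : ℕ → Ω → ℕ) (ω : Ω) :
    hitTime β ω ≤ ⨆ n, ((hittingBtwn (walkW β) {0} 1 n ω : ℕ) : ℝ≥0∞) := by
  by_cases h : ∃ t, 1 ≤ t ∧ walkW β t ω = 0
  · obtain ⟨t, ht, hW⟩ := h
    have hex : ∃ j ∈ Set.Icc 1 t, walkW β j ω ∈ ({0} : Set ℤ) := ⟨t, ⟨ht, le_rfl⟩, hW⟩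
    have hmem : hittingBtwn (walkW β) {0} 1 t ω ∈ {t | 1 ≤ t ∧ walkW β t ω = 0} :=
      ⟨(hittingBtwn_mem_Icc ht ω).1, hittingBtwn_mem_set hex⟩
    calc hitTime β ω ≤ ((hittingBtwn (walkW β) {0} 1 t ω : ℕ) : ℝ≥0∞) :=
          sInf_le (Set.mem_image_of_mem _ hmem)
      _ ≤ _ := le_iSup (fun n => ((hittingBtwn (walkW β) {0} 1 n ω : ℕ) : ℝ≥0∞)) t
  · simp only [not_exists, not_and] at h
    have hn : ∀ n, hittingBtwn (walkW β) {0} 1 n ω = n := fun n =>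
      if_neg fun ⟨j, hj, hW⟩ => h j hj.1 hW
    simp [hn, ENNReal.iSup_natCast]

variable [MeasurableSpace Ω] (hb : ∀ j, Measurable (β j))

lemma adapted_walkW : Adapted (pastFiltration β hb) (walkW β) := fun _ =>
  measurable_const.add <| Finset.measurable_sum _ fun j hj =>
    (measurable_from_nat.comp <| (measurable_pastFiltration_succ hb j).mono
      ((pastFiltration β hb).mono (mem_range.mp hj)) le_rfl).sub_const 1

lemma isStoppingTime_hittingBtwn_walkW (n : ℕ) :
    IsStoppingTime (pastFiltration β hb)
      (fun ω => WithTop.some (hittingBtwn (walkW β) {0} 1 n ω)) :=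
  (adapted_walkW hb).isStoppingTime_hittingBtwn (measurableSet_singleton 0)

end Walk

lemma integral_sq_le_of_wald {Ω : Type*} [MeasurableSpace Ω] {μ : Measure Ω}
    [IsProbabilityMeasure μ] {T S : Ω → ℝ} {ε σ2 : ℝ} (hε : 0 < ε) (hε1 : ε ≤ 1) (hσ2 : σ2 ≤ 1)
    (hT : ∀ ω, 0 ≤ T ω) (hTS : ∀ ω, ε * T ω ≤ 1 + S ω) (hTint : Integrable T μ)
    (hS : MemLp S 2 μ) (hS1 : ∫ ω, S ω ∂μ = 0) (hS2 : ∫ ω, S ω ^ 2 ∂μ = σ2 * ∫ ω, T ω ∂μ) :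
    ∫ ω, T ω ^ 2 ∂μ ≤ 2 / ε ^ 3 := by
  have hSint := hS.integrable one_le_two
  have h1S : MemLp (fun ω => 1 + S ω) 2 μ := (memLp_const (1 : ℝ)).add hS
  have h12S : Integrable (fun ω => 1 + 2 * S ω) μ := (integrable_const 1).add (hSint.const_mul 2)
  have hTmean : ε * ∫ ω, T ω ∂μ ≤ 1 := calc
    ε * ∫ ω, T ω ∂μ = ∫ ω, ε * T ω ∂μ := (integral_const_mul _ _).symm
    _ ≤ ∫ ω, 1 + S ω ∂μ := integral_mono (hTint.const_mul ε) ((integrable_const 1).add hSint) hTS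
    _ = 1 := by rw [integral_add (integrable_const 1) hSint, hS1]; simp
  have hTsq : ε ^ 2 * ∫ ω, T ω ^ 2 ∂μ ≤ 1 + σ2 * ∫ ω, T ω ∂μ := calc
    ε ^ 2 * ∫ ω, T ω ^ 2 ∂μ = ∫ ω, (ε * T ω) ^ 2 ∂μ := by
      rw [← integral_const_mul]; simp_rw [mul_pow]
    _ ≤ ∫ ω, (1 + S ω) ^ 2 ∂μ :=
      integral_mono_of_nonneg (ae_of_all _ fun ω => sq_nonneg _) h1S.integrable_sq
        (ae_of_all _ fun ω => pow_le_pow_left₀ (mul_nonneg hε.le (hT ω)) (hTS ω) 2)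
    _ = ∫ ω, (1 + 2 * S ω) + S ω ^ 2 ∂μ := by congr 1; ext ω; ring
    _ = 1 + σ2 * ∫ ω, T ω ∂μ := by
      rw [integral_add h12S hS.integrable_sq, integral_add (integrable_const 1) (hSint.const_mul 2),
        integral_const_mul, hS1, hS2]
      simp
  have hTpos : 0 ≤ ∫ ω, T ω ∂μ := integral_nonneg hT
  rw [le_div_iff₀ (by positivity)]
  nlinarith [mul_le_mul_of_nonneg_left hTsq hε.le, mul_nonneg (sub_nonneg.mpr hσ2) hTpos]

lemma lintegral_sq_le_of_le_iSup {Ω : Type*} [MeasurableSpace Ω] {μ : Measure Ω}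
    [IsFiniteMeasure μ] {X : Ω → ℝ≥0∞} {T : ℕ → Ω → ℕ} (hT : ∀ n, Measurable (T n))
    (hmono : ∀ ω, Monotone (T · ω)) (hTn : ∀ n ω, T n ω ≤ n)
    (hX : ∀ ω, X ω ≤ ⨆ n, (T n ω : ℝ≥0∞)) {C : ℝ} (hC : ∀ n, ∫ ω, (T n ω : ℝ) ^ 2 ∂μ ≤ C) :
    ∫⁻ ω, X ω ^ 2 ∂μ ≤ ENNReal.ofReal C := calc
  ∫⁻ ω, X ω ^ 2 ∂μ ≤ ∫⁻ ω, ⨆ n, (T n ω : ℝ≥0∞) ^ 2 ∂μ :=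
    lintegral_mono fun ω => ENNReal.iSup_pow (fun n => (T n ω : ℝ≥0∞)) 2 ▸ pow_le_pow_left' (hX ω) 2
  _ = ⨆ n, ∫⁻ ω, (T n ω : ℝ≥0∞) ^ 2 ∂μ :=
    lintegral_iSup (fun n => (measurable_from_nat.comp (hT n)).pow_const 2)
      fun _ _ hnk ω => pow_le_pow_left' (Nat.cast_le.mpr (hmono ω hnk)) 2
  _ ≤ ENNReal.ofReal C := iSup_le fun n => by
    have hint : Integrable (fun ω => (T n ω : ℝ) ^ 2) μ :=
      .of_bound ((measurable_from_nat.comp (hT n)).pow_const 2).aestronglyMeasurable ((n : ℝ) ^ 2)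
        (ae_of_all _ fun ω => by
          simpa using pow_le_pow_left₀ (Nat.cast_nonneg _) (Nat.cast_le.mpr (hTn n ω)) 2)
    calc ∫⁻ ω, (T n ω : ℝ≥0∞) ^ 2 ∂μ = ENNReal.ofReal (∫ ω, (T n ω : ℝ) ^ 2 ∂μ) := by
          rw [ofReal_integral_eq_lintegral_ofReal hint (ae_of_all _ fun ω => sq_nonneg _)]
          simp [ENNReal.ofReal_pow]
      _ ≤ ENNReal.ofReal C := ENNReal.ofReal_le_ofReal (hC n)

theorem integral_hittingBtwn_sq_le {Ω : Type*} [MeasurableSpace Ω] {μ : Measure Ω}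
    [IsProbabilityMeasure μ] {β : ℕ → Ω → ℕ} {ε : ℝ} (hε : 0 < ε) (hε1 : ε < 1) {m : ℕ}
    (hm : 0 < m) (hb : ∀ j, Measurable (β j)) (hind : iIndepFun β μ)
    (hlaw : ∀ j, μ.map (β j) = binomialMeasure m ((1 - ε) / m)) (n : ℕ) :
    ∫ ω, ((hittingBtwn (walkW β) {0} 1 n ω : ℕ) : ℝ) ^ 2 ∂μ ≤ 2 / ε ^ 3 := by
  have hmR : (0 : ℝ) < m := Nat.cast_pos.mpr hm
  have hp : (1 - ε) / m ∈ I :=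
    ⟨div_nonneg (by linarith) hmR.le,
      (div_le_one hmR).mpr (by linarith [(Nat.one_le_cast (α := ℝ)).mpr hm])⟩
  set p : I := ⟨(1 - ε) / m, hp⟩
  have hmp : (m : ℝ) * p = 1 - ε := mul_div_cancel₀ _ hmR.ne'
  have hβ : ∀ j, HasLaw (β j) (binomial m p) μ := fun j =>
    ⟨(hb j).aemeasurable, by rw [hlaw j, binomialMeasure_eq_binomial]⟩
  set ξ : ℕ → Ω → ℝ := fun j ω => (β j ω : ℝ) - (1 - ε)
  have hξ : ∀ j, Measurable[pastFiltration β hb (j + 1)] (ξ j) := fun j =>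
    (measurable_from_nat.comp (measurable_pastFiltration_succ hb j)).sub_const _
  have hindξ : ∀ j, Indep (MeasurableSpace.comap (ξ j) inferInstance) (pastFiltration β hb j) μ :=
    fun j => indep_of_indep_of_le_left (indep_pastFiltration hb hind j)
      ((measurable_from_nat.sub_const _).comp (comap_measurable (β j))).comap_le
  have hmean : ∀ j, μ[ξ j] = 0 := fun j =>
    (hmp ▸ integral_natCast_sub_of_hasLaw_binomial (hβ j) : ∫ ω, ((β j ω : ℝ) - (1 - ε)) ∂μ = 0)
  have hL2 : ∀ j, MemLp (ξ j) 2 μ := fun j =>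
    memLp_two_comp_of_hasLaw_binomial (hβ j) fun k => (k : ℝ) - (1 - ε)
  have hvar : ∀ j, μ[ξ j ^ 2] = (1 - ε) * (1 - p) := fun j =>
    (hmp ▸ integral_natCast_sub_sq_of_hasLaw_binomial (hβ j) :
      ∫ ω, ((β j ω : ℝ) - (1 - ε)) ^ 2 ∂μ = (1 - ε) * (1 - p))
  have hT := isStoppingTime_hittingBtwn_walkW hb n
  have hTN : ∀ ω, hittingBtwn (walkW β) {0} 1 n ω ≤ n := hittingBtwn_le
  refine integral_sq_le_of_wald hε hε1.le ?_ (fun ω => Nat.cast_nonneg _) (fun ω => ?_)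
    (hT.integrable_coe_of_le hTN) (memLp_partialSum_stopped hT hTN hL2)
    (integral_partialSum_stopped hξ hindξ hT hTN hmean fun j => (hL2 j).integrable one_le_two)
    (integral_partialSum_stopped_sq hξ hindξ hT hTN hmean hL2 hvar)
  · nlinarith [p.2.1, p.2.2]
  · simpa only [sub_sub_cancel] using sub_mul_hittingBtwn_le (1 - ε) n

/-- **Lemma 4 of Nachmias–Peres, second moment.**  Let `W` be the random walk started at `1`
with i.i.d. `Bin(m, (1-ε)/m)`-distributed increments shifted by `-1`, and let `τ` be its hitting
time of `0`.  There is a universal constant `C > 0` such that for every `ε ∈ (0,1/2)` and every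
integer `m > 1`, `E[τ²] ≤ C ε⁻³`. -/
theorem hitting_time_second_moment :
    ∃ C : ℝ, 0 < C ∧
      ∀ (ε : ℝ), ε ∈ Set.Ioo (0 : ℝ) (1 / 2) → ∀ (m : ℕ), 1 < m →
      ∀ (Ω : Type) (_ : MeasurableSpace Ω) (μ : Measure Ω), IsProbabilityMeasure μ →
      ∀ (β : ℕ → Ω → ℕ), (∀ j, Measurable (β j)) →
      iIndepFun β μ →
      (∀ j, μ.map (β j) = binomialMeasure m ((1 - ε) / m)) →
        ∫⁻ ω, (hitTime β ω) ^ 2 ∂μ ≤ ENNReal.ofReal (C * (ε ^ 3)⁻¹) := by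
  refine ⟨2, two_pos, ?_⟩
  rintro ε ⟨hε, hε2⟩ m hm Ω _ μ _ β hb hind hlaw
  refine lintegral_sq_le_of_le_iSup
    (fun n => (isStoppingTime_hittingBtwn_walkW hb n).measurable_of_coe)
    (fun ω => hittingBtwn_apply_mono_right _ _ _ ω) (fun n ω => hittingBtwn_le ω)
    (hitTime_le_iSup_hittingBtwn β) fun n => ?_
  rw [← div_eq_mul_inv]
  exact integral_hittingBtwn_sq_le hε (by linarith) (by omega) hb hind hlaw n
end

section
/- Let k be a positive integer and let a_0, …, a_{k−1} be integers with a_0 + a_1 + ⋯ + a_{k−1} = −1. Then there is precisely one index j ∈ {0, …, k−1} such that for all r ∈ {0, …, k−2}, the cyclic partial sum Σ_{i=0}^{r} a_{(j+i) mod k} is nonnegative. -/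
/-!
Let `S n = a_0 + ⋯ + a_{n-1}` be the walk of the periodically extended sequence, so that
`S (n + k) = S n - 1`. The cyclic partial sums from `j` are the increments `S (j + m) - S j`,
so `j` is good exactly when `S` does not drop below `S j` during the next `k - 1` steps.
The first minimiser of `S` on `[0, k)` is good: after wrapping around, `S` sits one below
values that were strictly above the minimum. Two good indices `p < q` would give
`S p ≤ S q ≤ S (p + k) = S p - 1`.
-/

open Finset

namespace CycleLemma

variable {S : ℕ → ℤ} {k : ℕ}

theorem unique_of_add_period_eq_sub_one (hS : ∀ n, S (n + k) = S n - 1) {p q : ℕ}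
    (hp : ∀ r, r + 1 < k → S p ≤ S (p + r + 1)) (hq : ∀ r, r + 1 < k → S q ≤ S (q + r + 1))
    (hpk : p < k) (hqk : q < k) : p = q := by
  by_contra hne
  wlog hpq : p < q generalizing p q
  · exact this hq hp hqk hpk (Ne.symm hne) (by omega)
  have hpq_le : S p ≤ S q := by
    simpa [show p + (q - p - 1) + 1 = q by omega] using hp (q - p - 1) (by omega)
  have hqp_le : S q ≤ S (p + k) := by
    simpa [show q + (p + k - q - 1) + 1 = p + k by omega] using hq (p + k - q - 1) (by omega)
  linarith [hS p]

theorem exists_of_add_period_eq_sub_one (hS : ∀ n, S (n + k) = S n - 1) (hk : 0 < k) :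
    ∃ j < k, ∀ r, r + 1 < k → S j ≤ S (j + r + 1) := by
  obtain ⟨i₀, hi₀, hmin⟩ := exists_min_image (range k) S (nonempty_range_iff.mpr hk.ne')
  have hP : ∃ j, j < k ∧ S j = S i₀ := ⟨i₀, mem_range.mp hi₀, rfl⟩
  obtain ⟨hjk, hjS⟩ := Nat.find_spec hP
  set j := Nat.find hP
  have hle : ∀ i < k, S j ≤ S i := fun i hi => hjS ▸ hmin i (mem_range.mpr hi)
  have hlt : ∀ i < j, S j < S i := fun i hij =>
    (hle i (hij.trans hjk)).lt_of_ne fun h => Nat.find_min hP hij ⟨hij.trans hjk, h ▸ hjS⟩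
  refine ⟨j, hjk, fun r hr => ?_⟩
  rcases lt_or_ge (j + r + 1) k with hwrap | hwrap
  · exact hle _ hwrap
  · have := hlt (j + r + 1 - k) (by omega)
    rw [show j + r + 1 = (j + r + 1 - k) + k by omega, hS]
    omega

end CycleLemma

theorem sum_range_mod_add_period (a : ℕ → ℤ) (k n : ℕ) :
    ∑ i ∈ range (k + n), a (i % k) = ∑ i ∈ range k, a i + ∑ i ∈ range n, a (i % k) := by
  rw [sum_range_add]
  congr 1
  · exact sum_congr rfl fun i hi => by rw [Nat.mod_eq_of_lt (mem_range.mp hi)]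
  · simp only [Nat.add_mod_left]

theorem sum_range_mod_shift (a : ℕ → ℤ) (k j m : ℕ) :
    ∑ i ∈ range m, a ((j + i) % k) =
      ∑ i ∈ range (j + m), a (i % k) - ∑ i ∈ range j, a (i % k) := by
  rw [sum_range_add]
  ring

/-- **Spitzer's cycle lemma** (Proposition 5 of Nachmias–Peres).  If `a_0, …, a_{k-1}` are
integers summing to `-1`, then there is precisely one index `j ∈ {0, …, k-1}` such that all the
cyclic partial sums `∑_{i=0}^{r} a_{(j+i) mod k}`, for `r ∈ {0, …, k-2}`, are nonnegative. -/
theorem spitzer_cycle_lemma (k : ℕ) (hk : 0 < k) (a : ℕ → ℤ)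
    (ha : ∑ i ∈ Finset.range k, a i = -1) :
    ∃! j : ℕ, j < k ∧ ∀ r : ℕ, r + 1 < k →
      0 ≤ ∑ i ∈ Finset.range (r + 1), a ((j + i) % k) := by
  set S : ℕ → ℤ := fun n => ∑ i ∈ range n, a (i % k)
  have hS : ∀ n, S (n + k) = S n - 1 := fun n => by
    simp only [S, add_comm n k, sum_range_mod_add_period, ha]
    ring
  have hgood : ∀ j, (∀ r, r + 1 < k → 0 ≤ ∑ i ∈ range (r + 1), a ((j + i) % k)) ↔
      ∀ r, r + 1 < k → S j ≤ S (j + r + 1) := fun j => by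
    simp only [sum_range_mod_shift, sub_nonneg, S, add_assoc]
  simp only [hgood]
  obtain ⟨j, hjk, hj⟩ := CycleLemma.exists_of_add_period_eq_sub_one hS hk
  exact ⟨j, ⟨hjk, hj⟩, fun q ⟨hqk, hq⟩ =>
    CycleLemma.unique_of_add_period_eq_sub_one hS hq hj hqk hjk⟩
end

section
/- Let n be a positive integer and let η_1, …, η_n be any nonnegative integers. Define A_0 = 1 and, for t ∈ {1, …, n}, A_t = A_{t−1} + η_t − 1 if A_{t−1} > 0 and A_t = η_t if A_{t−1} = 0. Define Y_0 = 1 and Y_t = Y_{t−1} + η_t − 1. Then for every t ∈ {1, …, n}, A_t = Y_t − min_{0 ≤ s ≤ t−1} Y_s + 1. -/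
/-!
Write `m_t = min_{s ≤ t} Y_s`. The invariant is `A_t = Y_t - m_{t-1} + 1`, i.e. `A_t` is the walk
reflected at its running minimum. It holds at `t = 0` with `m_{-1} := Y_0`, and one step of the
recursion preserves it: if `A_t > 0` then `Y_t ≥ m_{t-1}`, so the minimum does not move; if
`A_t = 0` then `Y_t = m_{t-1} - 1` is the new minimum, and `A_{t+1} = η_{t+1}` restarts from it.
-/

theorem Finset.inf'_range_add_one {α : Type*} [SemilatticeInf α] (f : ℕ → α) {t : ℕ}
    (h : (range t).Nonempty) :
    (range (t + 1)).inf' nonempty_range_add_one f = f t ⊓ (range t).inf' h f := by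
  simp only [range_add_one]
  exact inf'_insert h f

theorem Finset.inf'_range_one {α : Type*} [SemilatticeInf α] (f : ℕ → α) :
    (range 1).inf' nonempty_range_add_one f = f 0 := by
  simp only [range_one, inf'_singleton]

theorem cast_reflected_step_eq_sub_min (a e : ℕ) {y m : ℤ} (h : (a : ℤ) = y - m + 1) :
    ((if 0 < a then a + e - 1 else e : ℕ) : ℤ) = (y + e - 1) - min y m + 1 := by
  split_ifs <;> omega

/-- **The active-count formula** (equation (4) of Nachmias–Peres).  Given nonnegative integers
`η_1, …, η_n`, define `A_0 = 1`, `A_t = A_{t-1} + η_t - 1` if `A_{t-1} > 0` and `A_t = η_t`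
otherwise, and define `Y_0 = 1`, `Y_t = Y_{t-1} + η_t - 1`.  Then for every `t ∈ {1, …, n}`,
`A_t = Y_t - min_{0 ≤ s ≤ t-1} Y_s + 1`. -/
theorem active_eq_walk_minus_min (n : ℕ) (η : ℕ → ℕ) (A : ℕ → ℕ) (Y : ℕ → ℤ)
    (hA0 : A 0 = 1)
    (hA : ∀ t, 1 ≤ t → t ≤ n → A t = if 0 < A (t - 1) then A (t - 1) + η t - 1 else η t)
    (hY : ∀ t, 1 ≤ t → t ≤ n → Y t = Y (t - 1) + η t - 1) :
    ∀ t, ∀ ht : 1 ≤ t, t ≤ n →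
      (A t : ℤ) = Y t - (Finset.range t).inf'
        (Finset.nonempty_range_iff.mpr (by omega)) Y + 1 := by
  intro t ht
  induction t, ht using Nat.le_induction with
  | base =>
    intro h1n
    have hA1 := cast_reflected_step_eq_sub_min (A 0) (η 1) (y := Y 0) (m := Y 0) (by omega)
    rw [min_self] at hA1
    rwa [Finset.inf'_range_one, hA 1 le_rfl h1n, hY 1 le_rfl h1n]
  | succ t ht ih =>
    intro htn
    rw [Finset.inf'_range_add_one Y (Finset.nonempty_range_iff.mpr (by omega)),
      hA (t + 1) (by omega) htn, hY (t + 1) (by omega) htn, Nat.add_sub_cancel]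
    exact cast_reflected_step_eq_sub_min (A t) (η (t + 1)) (ih (by omega))
end

section
/- Let n be a positive integer and let η_1, …, η_n be any nonnegative integers. Define A_0 = 1 and, for t ∈ {1, …, n}, A_t = A_{t−1} + η_t − 1 if A_{t−1} > 0 and A_t = η_t if A_{t−1} = 0. Define Y_0 = 1 and Y_t = Y_{t−1} + η_t − 1, and define Z_t = #{ j : 1 ≤ j ≤ t−1 and A_j = 0 }. Then for every t ∈ {1, …, n}: (i) A_t = 0 if and only if Y_t < Y_s for all 0 ≤ s < t (i.e. Y attains a new record minimum at time t), and (ii) Z_t = − min_{0 ≤ s ≤ t−1} Y_s + 1. -/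
/-!
Let `Z t` count the zeros of `A` strictly before time `t`. Each visit of `A` to zero adds one
to `Z` and lets `A` restart at `η` instead of `η - 1`, so `A = Y + Z` throughout: `A` is `Y`
pushed up by the number of restarts so far. As `A ≥ 0`, a zero of `A` at time `t` means
`Y t = -Z t`, the lowest value `Y` can take, while a positive `A t` keeps `Y t` at or above the
previous minimum. Hence zeros of `A` are exactly the record minima of `Y`, each lowering the
running minimum by one, which gives `Z t = 1 - min_{s < t} Y s`.
-/

open Finset

def zeroCount (A : ℕ → ℕ) (t : ℕ) : ℕ :=
  ((Icc 1 (t - 1)).filter fun j => A j = 0).card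

lemma zeroCount_succ {A : ℕ → ℕ} (hA0 : A 0 ≠ 0) (t : ℕ) :
    zeroCount A (t + 1) = zeroCount A t + if A t = 0 then 1 else 0 := by
  cases t with
  | zero => simp [zeroCount, hA0]
  | succ t =>
    simp only [zeroCount, card_filter, Nat.add_sub_cancel]
    exact sum_Icc_succ_top (by omega) _

lemma inf'_range_succ {α : Type*} [LinearOrder α] (f : ℕ → α) {t : ℕ}
    (ht : (range t).Nonempty) :
    (range (t + 1)).inf' nonempty_range_add_one f = min ((range t).inf' ht f) (f t) := by
  simp only [range_add_one, inf'_insert ht, min_comm (f t)]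

lemma cast_eq_add_zeroCount {n : ℕ} {η A : ℕ → ℕ} {Y : ℕ → ℤ} (hA0 : A 0 = 1)
    (hA : ∀ t, 1 ≤ t → t ≤ n → A t = if 0 < A (t - 1) then A (t - 1) + η t - 1 else η t)
    (hY0 : Y 0 = 1) (hY : ∀ t, 1 ≤ t → t ≤ n → Y t = Y (t - 1) + η t - 1) :
    ∀ t ≤ n, (A t : ℤ) = Y t + zeroCount A t := by
  intro t
  induction t with
  | zero => simp [zeroCount, hA0, hY0]
  | succ t ih =>
    intro ht
    have hAt := hA (t + 1) (by omega) ht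
    have hYt := hY (t + 1) (by omega) ht
    simp only [Nat.add_sub_cancel] at hAt hYt
    have := ih (by omega)
    rw [zeroCount_succ (by omega), hAt, hYt]
    split_ifs <;> push_cast <;> omega

lemma zeroCount_eq_neg_inf'_add_one {n : ℕ} {A : ℕ → ℕ} {Y : ℕ → ℤ} (hA0 : A 0 ≠ 0)
    (hY0 : Y 0 = 1) (hAY : ∀ t ≤ n, (A t : ℤ) = Y t + zeroCount A t) {t : ℕ} (ht : 1 ≤ t)
    (htn : t ≤ n) :
    (zeroCount A t : ℤ) = -(range t).inf' (nonempty_range_iff.mpr (by omega)) Y + 1 := by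
  induction t, ht using Nat.le_induction with
  | base => simp [zeroCount, hY0]
  | succ t ht ih =>
    have hne : (range t).Nonempty := nonempty_range_iff.mpr (by omega)
    have hAt := hAY t (by omega)
    rw [zeroCount_succ hA0, inf'_range_succ Y hne]
    have := ih (by omega)
    split_ifs with h
    · rw [min_eq_right (by omega)]; push_cast; omega
    · rw [min_eq_left (by omega)]; push_cast; omega

/-- **Record minima and component counts** (Nachmias–Peres, Section 2).  Given nonnegative
integers `η_1, …, η_n`, define `A_0 = 1`, `A_t = A_{t-1} + η_t - 1` if `A_{t-1} > 0` and
`A_t = η_t` otherwise; define `Y_0 = 1`, `Y_t = Y_{t-1} + η_t - 1`; and let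
`Z_t = #{j : 1 ≤ j ≤ t-1, A_j = 0}`.  Then for every `t ∈ {1, …, n}`:
(i) `A_t = 0` iff `Y` attains a new record minimum at time `t`, and
(ii) `Z_t = -min_{0 ≤ s ≤ t-1} Y_s + 1`. -/
theorem record_minima_and_component_count (n : ℕ)
    (η : ℕ → ℕ) (A : ℕ → ℕ) (Y : ℕ → ℤ)
    (hA0 : A 0 = 1)
    (hA : ∀ t, 1 ≤ t → t ≤ n → A t = if 0 < A (t - 1) then A (t - 1) + η t - 1 else η t)
    (hY0 : Y 0 = 1)
    (hY : ∀ t, 1 ≤ t → t ≤ n → Y t = Y (t - 1) + η t - 1) :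
    ∀ t, ∀ ht : 1 ≤ t, t ≤ n →
      (A t = 0 ↔ ∀ s, s < t → Y t < Y s) ∧
      ((((Finset.Icc 1 (t - 1)).filter fun j => A j = 0).card : ℤ) =
        -(Finset.range t).inf' (Finset.nonempty_range_iff.mpr (by omega)) Y + 1) := by
  intro t ht htn
  have hAY := cast_eq_add_zeroCount hA0 hA hY0 hY
  have hZ := zeroCount_eq_neg_inf'_add_one (by omega) hY0 hAY ht htn
  refine ⟨?_, hZ⟩
  have hAt := hAY t htn
  have hrecord :
      Y t < (range t).inf' (nonempty_range_iff.mpr (by omega)) Y ↔ ∀ s < t, Y t < Y s := by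
    simp only [lt_inf'_iff, mem_range]
  rw [← hrecord]
  omega
end
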